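/- Let 𝔎 denote the metric space of nonempty compact subsets of ℂ with the Hausdorff distance. Let A_n, A ∈ 𝔎 with A_n → A in Hausdorff distance, let X be a compact topological space, and let τ_n, τ : X → 𝔎 be continuous maps such that τ_n → τ uniformly on X. Suppose that for each n the family (τ_n(x))_{x ∈ X} wraps A_n. Then the family (τ(x))_{x ∈ X} wraps A. -/

import Mathlib

open Filter Topology TopologicalSpace

/-- A family `(τ x)_{x ∈ X}` of subsets of `ℂ` *wraps* a set `A ⊆ ℂ` if every open
half-plane `{z : Re (c z) < r}` (`c ≠ 0`) containing `A` contains some member `τ x`. -/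
def Wraps {X : Type*} (A : Set ℂ) (τ : X → Set ℂ) : Prop :=
  ∀ (c : ℂ), c ≠ 0 → ∀ r : ℝ,
    A ⊆ {z : ℂ | (c * z).re < r} → ∃ x : X, τ x ⊆ {z : ℂ | (c * z).re < r}

/-!
A half-plane `{z : Re (c z) < r}` containing the compact set `A` already contains `A` with a
margin: `A ⊆ {Re (c z) < r'}` for some `r' < r`. Since `z ↦ Re (c z)` is `‖c‖`-Lipschitz, moving
a compact set by Hausdorff distance `δ` moves this functional by at most `‖c‖ δ`. Choosing `δ`
with `‖c‖ δ = (r - r') / 2`, eventually `Aₙ` lies in the half-plane of level `(r + r') / 2`,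
some `τₙ x` lies there as well, and then `τ x` lies in the original half-plane.
-/

open scoped NNReal

theorem IsCompact.exists_lt_forall_lt {α : Type*} [TopologicalSpace α] {s : Set α}
    (hs : IsCompact s) {f : α → ℝ} (hf : ContinuousOn f s) {r : ℝ} (h : ∀ x ∈ s, f x < r) :
    ∃ r' < r, ∀ x ∈ s, f x < r' := by
  rcases s.eq_empty_or_nonempty with rfl | hne
  · exact ⟨r - 1, by linarith, by simp⟩
  obtain ⟨x₀, hx₀, hmax⟩ := hs.exists_isMaxOn hne hf
  have hx₀r := h x₀ hx₀
  exact ⟨(f x₀ + r) / 2, by linarith, fun x hx => by linarith [isMaxOn_iff.1 hmax x hx]⟩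

theorem Metric.NonemptyCompacts.forall_lt_add_of_dist_lt {α : Type*} [MetricSpace α]
    {f : α → ℝ} {K : ℝ≥0} (hf : LipschitzWith K f) {s t : NonemptyCompacts α} {δ r : ℝ}
    (hst : dist s t < δ) (ht : ∀ y ∈ t, f y < r) : ∀ x ∈ s, f x < r + K * δ := by
  intro x hx
  obtain ⟨y, hy, hxy⟩ := Metric.exists_dist_lt_of_hausdorffDist_lt hx hst (edist_ne_top s t)
  have hfxy : f x - f y ≤ K * dist x y := (le_abs_self _).trans (hf.dist_le_mul x y)
  have hKδ : (K : ℝ) * dist x y ≤ K * δ := by gcongr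
  linarith [ht y hy]

theorem Complex.lipschitzWith_re_mul (c : ℂ) : LipschitzWith ‖c‖₊ fun z : ℂ => (c * z).re :=
  LipschitzWith.of_dist_le_mul fun z w => by
    rw [Real.dist_eq, ← Complex.sub_re, ← mul_sub, coe_nnnorm, Complex.dist_eq, ← norm_mul]
    exact Complex.abs_re_le_norm _

theorem wraps_of_tendsto_of_tendstoUniformly
    {X : Type*}
    (A : ℕ → NonemptyCompacts ℂ) (A₀ : NonemptyCompacts ℂ)
    (hA : Tendsto A atTop (𝓝 A₀))
    (τ : ℕ → X → NonemptyCompacts ℂ) (τ₀ : X → NonemptyCompacts ℂ)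
    (hunif : TendstoUniformly τ τ₀ atTop)
    (hwrap : ∀ n, Wraps (A n : Set ℂ) (fun x => (τ n x : Set ℂ))) :
    Wraps (A₀ : Set ℂ) (fun x => (τ₀ x : Set ℂ)) := by
  intro c hc r hA₀
  have hf := Complex.lipschitzWith_re_mul c
  obtain ⟨r', hr', hA₀r'⟩ := A₀.isCompact.exists_lt_forall_lt hf.continuous.continuousOn hA₀
  have hc' : 0 < ‖c‖ := norm_pos_iff.2 hc
  obtain ⟨δ, hδ, hcδ⟩ : ∃ δ > 0, ‖c‖ * δ = (r - r') / 2 :=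
    ⟨(r - r') / (2 * ‖c‖), by apply div_pos <;> linarith, by field_simp⟩
  obtain ⟨n, hAn, hτn⟩ :=
    ((Metric.tendsto_nhds.1 hA δ hδ).and (Metric.tendstoUniformly_iff.1 hunif δ hδ)).exists
  have hAn' := Metric.NonemptyCompacts.forall_lt_add_of_dist_lt hf hAn hA₀r'
  obtain ⟨x, hx⟩ := hwrap n c hc (r' + ‖c‖ * δ) hAn'
  refine ⟨x, fun z hz => ?_⟩
  have hz' : (c * z).re < r' + ‖c‖ * δ + ‖c‖ * δ :=
    Metric.NonemptyCompacts.forall_lt_add_of_dist_lt hf (hτn x) hx z hz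
  show (c * z).re < r
  linarith
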